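/- Let P be a finite poset and φ a partial representation of P by partial functions: each u is assigned a piecewise linear continuous function φ(u) defined on a (possibly empty) closed subinterval of [0,1], such that u < v in P implies φ(u)(x) < φ(v)(x) for all x in the intersection of the domains. Define Reg(u) = φ(u)* ∩ ∩_{a > u} φ(a)↓ ∩ ∩_{a < u} φ(a)↑, where φ(a)* is the graph of φ(a) together with all points over [0,1] \ dom φ(a), φ(a)↓ (resp. φ(a)↑) is the open region strictly below (above) φ(a) over dom φ(a) together with all points over [0,1] \ dom φ(a). Then there exists a representation ψ of P by continuous functions on all of [0,1] extending every φ(u) if and only if for every pair of incomparable elements u, v of P, Reg(u) ∩ Reg(v) ≠ ∅. -/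

import Mathlib

/-- `f` is piecewise linear on the set `s` (a closed subinterval, possibly empty):
`s = [t 0, t n]` for monotone breakpoints `t`, and `f` is linear on each `[t i, t (i+1)]`. -/
def IsPWLOn (f : unitInterval → ℝ) (s : Set unitInterval) : Prop :=
  s = ∅ ∨ ∃ n : ℕ, ∃ t : Fin (n + 1) → unitInterval, Monotone t ∧
    s = Set.Icc (t 0) (t (Fin.last n)) ∧
    ∀ i : Fin n, ∃ a b : ℝ, ∀ x ∈ Set.Icc (t i.castSucc) (t i.succ), f x = a * (x : ℝ) + b

/-- The region of `u` for a partial representation by partial functions: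
`φ(u)* ∩ ⋂_{a > u} φ(a)↓ ∩ ⋂_{a < u} φ(a)↑`, where points over `[0,1] \ dom φ(a)` are free. -/
def RegP {P : Type*} [PartialOrder P] (dom : P → Set unitInterval)
    (f : P → unitInterval → ℝ) (u : P) : Set (unitInterval × ℝ) :=
  {p | (p.1 ∈ dom u → p.2 = f u p.1) ∧
    (∀ a : P, u < a → p.1 ∈ dom a → p.2 < f a p.1) ∧
    (∀ a : P, a < u → p.1 ∈ dom a → f a p.1 < p.2)}

/-!
If `ψ` is a representation extending `φ`, then for incomparable `u, v` the difference `ψ u - ψ v`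
changes sign, so by the intermediate value theorem the graphs meet at some `x`, and `(x, ψ u x)`
lies in `Reg(u) ∩ Reg(v)`.

Conversely, pick for each incomparable pair a point of `Reg(u) ∩ Reg(v)`. Unless the point lies over
both domains, it can be moved in a whole neighbourhood of its abscissa, so the abscissae of the
unanchored points can be taken pairwise distinct. Adding these points to the domains as pins keeps
the partial representation strict, and any strict partial representation by continuous functions
on closed sets extends to a representation on `[0,1]`: at each `x₀` the active constraints can be
completed to a strictly monotone vector in `ℝ^P`, this persists near `x₀`, and strictly monotone
vectors form a convex set, so a partition of unity glues the local solutions. The pins force the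
graphs of incomparable elements to meet, so they are not comparable in the extension.
-/

open Set Filter Topology

section StrictMonoExtension

variable {X P β : Type*} [TopologicalSpace X] [PartialOrder P]

theorem StrictMonoOn.exists_strictMono_eqOn [Finite P] [LinearOrder β] [DenselyOrdered β]
    [NoMaxOrder β] [NoMinOrder β] [Nonempty β] {S : Set P} {c : P → β} (hc : StrictMonoOn c S) :
    ∃ y : P → β, StrictMono y ∧ EqOn y c S := by
  classical
  suffices h : ∀ T : Finset P, ∃ y : P → β, StrictMonoOn y (S ∪ T) ∧ EqOn y c S by
    have := Fintype.ofFinite P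
    obtain ⟨y, hy, hyc⟩ := h Finset.univ
    exact ⟨y, fun u v huv => hy (by simp) (by simp) huv, hyc⟩
  intro T
  induction T using Finset.induction_on with
  | empty => exact ⟨c, by simpa using hc, eqOn_refl c S⟩
  | insert m T hmT ih =>
    obtain ⟨y, hy, hyc⟩ := ih
    by_cases hmS : m ∈ S
    · refine ⟨y, hy.mono ?_, hyc⟩
      rw [Finset.coe_insert]
      exact union_subset subset_union_left (insert_subset (.inl hmS) subset_union_right)
    obtain ⟨z, hlo, hhi⟩ := Set.Finite.exists_between' (toFinite (y '' {a ∈ S ∪ T | a < m}))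
      (toFinite (y '' {b ∈ S ∪ T | m < b}))
      (by rintro _ ⟨a, ha, rfl⟩ _ ⟨b, hb, rfl⟩; exact hy ha.1 hb.1 (ha.2.trans hb.2))
    have hmem : ∀ {u}, u ∈ S ∪ ↑(insert m T) → u ≠ m → u ∈ S ∪ ↑T := by
      intro u hu hum; simp_all
    refine ⟨Function.update y m z, fun u hu v hv huv => ?_, fun u hu => ?_⟩
    · rcases eq_or_ne u m with rfl | hum
      · simpa [huv.ne'] using hhi (y v) ⟨v, ⟨hmem hv huv.ne', huv⟩, rfl⟩
      rcases eq_or_ne v m with rfl | hvm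
      · simpa [hum] using hlo (y u) ⟨u, ⟨hmem hu hum, huv⟩, rfl⟩
      · simpa [hum, hvm] using hy (hmem hu hum) (hmem hv hvm) huv
    · rw [Function.update_of_ne (ne_of_mem_of_not_mem hu hmS)]
      exact hyc hu

theorem convex_setOf_strictMono : Convex ℝ {y : P → ℝ | StrictMono y} := by
  intro y hy z hz a b ha hb hab
  rcases ha.lt_or_eq with ha | rfl
  · exact (hy.const_mul ha).add_monotone (hz.monotone.const_mul hb)
  · simpa [(zero_add b).symm.trans hab] using hz

theorem ContinuousOn.exists_continuousMap_eqOn [NormalSpace X] {s : Set X} (hs : IsClosed s)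
    {g : X → ℝ} (hg : ContinuousOn g s) : ∃ G : C(X, ℝ), EqOn G g s := by
  obtain ⟨G, hG⟩ := ContinuousMap.exists_restrict_eq hs ⟨s.domRestrict g, hg.domRestrict⟩
  exact ⟨G, fun x hx => congr($hG ⟨x, hx⟩)⟩

theorem exists_continuousMap_strictMono_extension [NormalSpace X] [ParacompactSpace X] [Finite P]
    {D : P → Set X} {g : P → X → ℝ} (hD : ∀ u, IsClosed (D u))
    (hg : ∀ u, ContinuousOn (g u) (D u))
    (hlt : ∀ u v, u < v → ∀ x ∈ D u ∩ D v, g u x < g v x) :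
    ∃ ψ : C(X, P → ℝ), ∀ x, StrictMono (ψ x) ∧ ∀ u, x ∈ D u → ψ x u = g u x := by
  classical
  choose G hG using fun u => (hg u).exists_continuousMap_eqOn (hD u)
  refine exists_continuous_forall_mem_convex_of_local
    (t := fun x => {y | StrictMono y ∧ ∀ u, x ∈ D u → y u = g u x})
    (fun x => convex_setOf_strictMono.inter fun y hy z hz a b _ _ hab u hu => by
      simp [hy u hu, hz u hu, ← add_mul, hab]) fun x₀ => ?_
  obtain ⟨y₀, hy₀, hy₀g⟩ := StrictMonoOn.exists_strictMono_eqOn (S := {u | x₀ ∈ D u})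
    (c := fun u => g u x₀) fun u hu v hv huv => hlt u v huv x₀ ⟨hu, hv⟩
  set φ : X → P → ℝ := fun x u => if x₀ ∈ D u then G u x else y₀ u with hφ
  have hφc : Continuous φ := continuous_pi fun u => by
    simp only [hφ]; split_ifs; exacts [(G u).continuous, continuous_const]
  have hφ₀ : φ x₀ = y₀ := funext fun u => by
    simp only [hφ]; split_ifs with h; exacts [(hG u h).trans (hy₀g h).symm, rfl]
  have hmono : ∀ᶠ x in 𝓝 x₀, StrictMono (φ x) :=
    eventually_all.2 fun u => eventually_all.2 fun v => eventually_imp_distrib_left.2 fun huv =>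
      ((continuous_apply u).comp hφc).continuousAt.eventually_lt
        ((continuous_apply v).comp hφc).continuousAt (by simpa [hφ₀] using hy₀ huv)
  have hactive : ∀ᶠ x in 𝓝 x₀, ∀ u, x ∈ D u → x₀ ∈ D u :=
    eventually_all.2 fun u => by
      by_cases h : x₀ ∈ D u
      · exact Eventually.of_forall fun _ _ => h
      · filter_upwards [(hD u).isOpen_compl.mem_nhds h] with x hx hxu using absurd hxu hx
  refine ⟨_, hmono.and hactive, φ, hφc.continuousOn, fun x ⟨hx, hxD⟩ => ⟨hx, fun u hu => ?_⟩⟩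
  simp [hφ, hxD u hu, hG u hu]

end StrictMonoExtension

theorem IsClosed.eventually_mem_imp_lt {X α : Type*} [TopologicalSpace X] [LinearOrder α]
    [TopologicalSpace α] [OrderClosedTopology α] {C : Set X} (hC : IsClosed C) {F G : X → α}
    {x₀ : X} (hF : x₀ ∈ C → ContinuousWithinAt F C x₀) (hG : x₀ ∈ C → ContinuousWithinAt G C x₀)
    (hlt : x₀ ∈ C → F x₀ < G x₀) : ∀ᶠ x in 𝓝 x₀, x ∈ C → F x < G x := by
  by_cases hx₀ : x₀ ∈ C
  · exact eventually_nhdsWithin_iff.1 ((hF hx₀).eventually_lt (hG hx₀) (hlt hx₀))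
  · filter_upwards [hC.isOpen_compl.mem_nhds hx₀] with x hx hxC using absurd hxC hx

theorem exists_injOn_fst_of_forall_finite {ι X Y : Type*} [Finite ι] {R : ι → Set (X × Y)}
    {A : ι → Set X} (h : ∀ i, ∀ F : Set X, F.Finite → ∃ p ∈ R i, p.1 ∈ A i ∨ p.1 ∉ F) :
    ∃ pt : ι → X × Y, (∀ i, pt i ∈ R i) ∧ InjOn (fun i => (pt i).1) {i | (pt i).1 ∉ A i} := by
  classical
  choose pt₀ hpt₀ using fun i => h i ∅ finite_empty
  suffices H : ∀ s : Finset ι, ∃ pt : ι → X × Y, (∀ i, pt i ∈ R i) ∧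
      InjOn (fun i => (pt i).1) {i | i ∈ s ∧ (pt i).1 ∉ A i} by
    have := Fintype.ofFinite ι
    obtain ⟨pt, hR, hinj⟩ := H Finset.univ
    exact ⟨pt, hR, hinj.mono fun i hi => by exact ⟨Finset.mem_univ i, hi⟩⟩
  intro s
  induction s using Finset.induction_on with
  | empty => exact ⟨pt₀, fun i => (hpt₀ i).1, by simp⟩
  | insert k s hk ih =>
    obtain ⟨pt, hR, hinj⟩ := ih
    obtain ⟨p, hpR, hp⟩ := h k ((fun i => (pt i).1) '' {i | i ∈ s}) (s.finite_toSet.image _)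
    set pt' := Function.update pt k p with hpt'
    have hpt's : ∀ i ∈ s, pt' i = pt i := fun i hi =>
      Function.update_of_ne (ne_of_mem_of_not_mem hi hk) p pt
    set S := {i | i ∈ s ∧ (pt i).1 ∉ A i}
    have hinj' : InjOn (fun i => (pt' i).1) S := hinj.congr fun i hi => by simp [hpt's i hi.1]
    have hsub : {i | i ∈ insert k s ∧ (pt' i).1 ∉ A i} ⊆ insert k S := by
      rintro i ⟨hi, hiA⟩
      rcases Finset.mem_insert.1 hi with rfl | hi
      · exact mem_insert _ _
      · exact mem_insert_of_mem _ ⟨hi, by simpa [hpt's i hi] using hiA⟩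
    refine ⟨pt', fun i => ?_, ?_⟩
    · rcases eq_or_ne i k with rfl | hi
      · simpa [hpt'] using hpR
      · simpa [hpt', hi] using hR i
    rcases hp with hpA | hpF
    · refine hinj'.mono fun i hi => (hsub hi).resolve_left ?_
      rintro rfl
      exact hi.2 (by simpa [hpt'] using hpA)
    · refine ((injOn_insert fun h => hk h.1).2 ⟨hinj', ?_⟩).mono hsub
      rintro ⟨i, hi, hik⟩
      simp only [hpt's i hi.1] at hik
      exact hpF ⟨i, hi.1, by simpa [hpt'] using hik⟩

theorem IsPWLOn.continuousOn {f : unitInterval → ℝ} {s : Set unitInterval} (h : IsPWLOn f s) :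
    ContinuousOn f s := by
  rcases h with rfl | ⟨n, t, ht, rfl, hlin⟩
  · exact continuousOn_empty f
  induction n with
  | zero => simp
  | succ n ih =>
    have hinit := ih (t ∘ Fin.castSucc) (ht.comp Fin.strictMono_castSucc.monotone)
      fun i => by simpa [← Fin.succ_castSucc] using hlin i.castSucc
    obtain ⟨a, b, hab⟩ := hlin (Fin.last n)
    rw [← Icc_union_Icc_eq_Icc (ht (Fin.zero_le _)) (ht (Fin.le_last _))]
    refine ContinuousOn.union_of_isClosed (by simpa using hinit) ?_ isClosed_Icc isClosed_Icc
    exact (by fun_prop : Continuous fun x : unitInterval => a * (x : ℝ) + b).continuousOn.congr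
      fun x hx => by simpa using hab x hx

section Regions

variable {P : Type*} [PartialOrder P] {dom : P → Set unitInterval} {f : P → unitInterval → ℝ}
  {u v : P}

theorem mk_mem_regP_of_forall_lt {ψ : P → unitInterval → ℝ}
    (hψ : ∀ u v, u < v → ∀ x, ψ u x < ψ v x) (hext : ∀ u, ∀ x ∈ dom u, ψ u x = f u x)
    (u : P) (x : unitInterval) : (x, ψ u x) ∈ RegP dom f u :=
  ⟨hext u x, fun a ha hx => hext a x hx ▸ hψ u a ha x, fun a ha hx => hext a x hx ▸ hψ a u ha x⟩

theorem mk_mem_regP_of_mem (hrep : ∀ u v : P, u < v → ∀ x ∈ dom u ∩ dom v, f u x < f v x)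
    {x : unitInterval} (hx : x ∈ dom u) : (x, f u x) ∈ RegP dom f u :=
  ⟨fun _ => rfl, fun a ha hxa => hrep u a ha x ⟨hx, hxa⟩, fun a ha hxa => hrep a u ha x ⟨hxa, hx⟩⟩

theorem mk_mem_regP_of_mem_union (hrep : ∀ u v : P, u < v → ∀ x ∈ dom u ∩ dom v, f u x < f v x)
    {T : Set unitInterval} {g : unitInterval → ℝ} (hgf : EqOn g (f u) (dom u))
    (hT : ∀ x ∈ T, x ∉ dom u → (x, g x) ∈ RegP dom f u) {x : unitInterval} (hx : x ∈ dom u ∪ T) :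
    (x, g x) ∈ RegP dom f u := by
  by_cases hxu : x ∈ dom u
  · rw [hgf hxu]; exact mk_mem_regP_of_mem hrep hxu
  · exact hT x (hx.resolve_left hxu) hxu

theorem lt_of_mem_regP (huv : u < v) {x : unitInterval} {y z : ℝ} (hy : (x, y) ∈ RegP dom f u)
    (hz : (x, z) ∈ RegP dom f v) (hx : x ∈ dom u ∨ x ∈ dom v) : y < z := by
  rcases hx with hx | hx
  · rw [show y = f u x from hy.1 hx]; exact hz.2.2 u huv hx
  · rw [show z = f v x from hz.1 hx]; exact hy.2.1 v huv hx

theorem lt_of_mem_union_of_pins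
    (hrep : ∀ u v : P, u < v → ∀ x ∈ dom u ∩ dom v, f u x < f v x) {T : P → Set unitInterval}
    {g : P → unitInterval → ℝ} (hgf : ∀ u, EqOn (g u) (f u) (dom u))
    (hT : ∀ u, ∀ x ∈ T u, x ∉ dom u → (x, g u x) ∈ RegP dom f u)
    (hTT : ∀ u v, u < v → ∀ x ∈ T u ∩ T v, x ∈ dom u ∨ x ∈ dom v) (huv : u < v)
    {x : unitInterval} (hx : x ∈ (dom u ∪ T u) ∩ (dom v ∪ T v)) : g u x < g v x := by
  refine lt_of_mem_regP huv (mk_mem_regP_of_mem_union hrep (hgf u) (hT u) hx.1)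
    (mk_mem_regP_of_mem_union hrep (hgf v) (hT v) hx.2) ?_
  by_contra hx'
  rw [not_or] at hx'
  exact (hTT u v huv x ⟨hx.1.resolve_left hx'.1, hx.2.resolve_left hx'.2⟩).elim hx'.1 hx'.2

theorem regP_inter_nonempty_of_representation {ψ : P → C(unitInterval, ℝ)}
    (hψ : ∀ u v : P, u < v ↔ ∀ x : unitInterval, ψ u x < ψ v x)
    (hext : ∀ u : P, ∀ x ∈ dom u, ψ u x = f u x) (huv : ¬ u < v) (hvu : ¬ v < u) :
    (RegP dom f u ∩ RegP dom f v).Nonempty := by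
  obtain ⟨a, ha⟩ : ∃ a, ψ v a ≤ ψ u a := by
    simpa only [hψ, not_forall, not_lt] using huv
  obtain ⟨b, hb⟩ : ∃ b, ψ u b ≤ ψ v b := by simpa only [hψ, not_forall, not_lt] using hvu
  obtain ⟨x, hx⟩ := intermediate_value_univ₂ (ψ v).continuous (ψ u).continuous ha hb
  have hreg := mk_mem_regP_of_forall_lt (dom := dom) (fun u v huv => (hψ u v).1 huv) hext
  exact ⟨(x, ψ u x), hreg u x, hx ▸ hreg v x⟩

theorem eventually_mk_mem_regP [Finite P] (hdom : ∀ w, IsClosed (dom w))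
    (hf : ∀ w, ContinuousOn (f w) (dom w)) {Y : unitInterval → ℝ} {x₀ : unitInterval}
    (hY : ContinuousAt Y x₀) (h₀ : (x₀, Y x₀) ∈ RegP dom f u)
    (hYu : ∀ᶠ x in 𝓝 x₀, x ∈ dom u → Y x = f u x) :
    ∀ᶠ x in 𝓝 x₀, (x, Y x) ∈ RegP dom f u := by
  have hup : ∀ a, u < a → ∀ᶠ x in 𝓝 x₀, x ∈ dom a → Y x < f a x := fun a ha =>
    (hdom a).eventually_mem_imp_lt (fun _ => hY.continuousWithinAt) (hf a x₀) (h₀.2.1 a ha)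
  have hdown : ∀ a, a < u → ∀ᶠ x in 𝓝 x₀, x ∈ dom a → f a x < Y x := fun a ha =>
    (hdom a).eventually_mem_imp_lt (hf a x₀) (fun _ => hY.continuousWithinAt) (h₀.2.2 a ha)
  filter_upwards [hYu, eventually_all.2 fun a => eventually_imp_distrib_left.2 (hup a),
    eventually_all.2 fun a => eventually_imp_distrib_left.2 (hdown a)] with x h₁ h₂ h₃
  exact ⟨h₁, h₂, h₃⟩

theorem eventually_exists_mem_regP_inter [Finite P] (hdom : ∀ w, IsClosed (dom w))
    (hf : ∀ w, ContinuousOn (f w) (dom w)) {x₀ : unitInterval} {y₀ : ℝ}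
    (h₀ : (x₀, y₀) ∈ RegP dom f u ∩ RegP dom f v) (hx₀ : x₀ ∉ dom u ∩ dom v) :
    ∀ᶠ x in 𝓝 x₀, ∃ y, (x, y) ∈ RegP dom f u ∩ RegP dom f v := by
  wlog hv : x₀ ∉ dom v generalizing u v
  · simp only [inter_comm (RegP dom f u)] at h₀ ⊢
    exact this h₀ (by rwa [inter_comm]) fun h => hx₀ ⟨h, not_not.1 hv⟩
  obtain ⟨G, hG⟩ := (hf u).exists_continuousMap_eqOn (hdom u)
  -- Near `x₀` the constraint `y = f u x` is either absent or carried by the Tietze extension `G`.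
  set Y : unitInterval → ℝ := fun x => G x + (y₀ - G x₀) with hY
  have hY₀ : Y x₀ = y₀ := by simp [hY]
  have hYu : ∀ᶠ x in 𝓝 x₀, x ∈ dom u → Y x = f u x := by
    by_cases hu : x₀ ∈ dom u
    · have hGy : G x₀ = y₀ := (hG hu).trans (h₀.1.1 hu).symm
      exact Eventually.of_forall fun x hx => by simp [hY, hGy, hG hx]
    · filter_upwards [(hdom u).isOpen_compl.mem_nhds hu] with x hx hxu using absurd hxu hx
  have hYc : ContinuousAt Y x₀ := by fun_prop
  filter_upwards [eventually_mk_mem_regP hdom hf hYc (hY₀ ▸ h₀.1) hYu,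
    eventually_mk_mem_regP hdom hf hYc (hY₀ ▸ h₀.2)
      (mem_of_superset ((hdom v).isOpen_compl.mem_nhds hv) fun x hx hxv => absurd hxv hx)]
    with x hxu hxv using ⟨Y x, hxu, hxv⟩

theorem exists_mem_regP_inter_mem_dom_or_notMem [Finite P] (hdom : ∀ w, IsClosed (dom w))
    (hf : ∀ w, ContinuousOn (f w) (dom w)) (hne : (RegP dom f u ∩ RegP dom f v).Nonempty)
    {F : Set unitInterval} (hF : F.Finite) :
    ∃ p ∈ RegP dom f u ∩ RegP dom f v, p.1 ∈ dom u ∩ dom v ∨ p.1 ∉ F := by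
  obtain ⟨⟨x₀, y₀⟩, h₀⟩ := hne
  by_cases hx₀ : x₀ ∈ dom u ∩ dom v
  · exact ⟨_, h₀, .inl hx₀⟩
  obtain ⟨x, ⟨y, hy⟩, hxF⟩ :=
    ((infinite_of_mem_nhds x₀ (eventually_exists_mem_regP_inter hdom hf h₀ hx₀)).sdiff hF).nonempty
  exact ⟨(x, y), hy, .inr hxF⟩

theorem exists_pins [Finite P] (hdom : ∀ u, IsClosed (dom u))
    (hf : ∀ u, ContinuousOn (f u) (dom u))
    (hreg : ∀ u v : P, u ≠ v → ¬ u < v → ¬ v < u → (RegP dom f u ∩ RegP dom f v).Nonempty) :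
    ∃ (T : P → Set unitInterval) (pin : unitInterval → ℝ), (∀ u, (T u).Finite) ∧
      (∀ u, ∀ x ∈ T u, x ∉ dom u → (x, pin x) ∈ RegP dom f u) ∧
      (∀ u v, u < v → ∀ x ∈ T u ∩ T v, x ∈ dom u ∨ x ∈ dom v) ∧
      ∀ u v, u ≠ v → ¬ u < v → ¬ v < u → ∃ x ∈ T u ∩ T v, ∃ y,
        (x, y) ∈ RegP dom f u ∩ RegP dom f v ∧ (x ∉ dom u ∩ dom v → pin x = y) := by
  classical
  let ι := {p : P × P // p.1 ≠ p.2 ∧ ¬ p.1 < p.2 ∧ ¬ p.2 < p.1}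
  obtain ⟨pt, hpt, hinj⟩ := exists_injOn_fst_of_forall_finite
    (R := fun i : ι => RegP dom f i.1.1 ∩ RegP dom f i.1.2) (A := fun i => dom i.1.1 ∩ dom i.1.2)
    fun i _ hF =>
      exists_mem_regP_inter_mem_dom_or_notMem hdom hf (hreg _ _ i.2.1 i.2.2.1 i.2.2.2) hF
  have hpt_mem : ∀ (i : ι) u, (i.1.1 = u ∨ i.1.2 = u) → pt i ∈ RegP dom f u := by
    rintro i u (rfl | rfl); exacts [(hpt i).1, (hpt i).2]
  have hunanchored : ∀ (i : ι) u, (i.1.1 = u ∨ i.1.2 = u) → (pt i).1 ∉ dom u →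
      (pt i).1 ∉ dom i.1.1 ∩ dom i.1.2 := by
    rintro i u (rfl | rfl) hx h; exacts [hx h.1, hx h.2]
  have hcomp : ∀ (i : ι) u v, (i.1.1 = u ∨ i.1.2 = u) → (i.1.1 = v ∨ i.1.2 = v) → ¬ u < v := by
    rintro ⟨⟨a, b⟩, hab, hlt, hgt⟩ u v (rfl | rfl) (rfl | rfl) huv <;> simp_all
  -- Each `pt i` pins the functions of both ends of `i` at `(pt i).1`.
  let T : P → Set unitInterval := fun u => {x | ∃ i : ι, (i.1.1 = u ∨ i.1.2 = u) ∧ (pt i).1 = x}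
  let pin : unitInterval → ℝ := Function.extend (fun i : {i | (pt i).1 ∉ dom i.1.1 ∩ dom i.1.2} =>
    (pt i).1) (fun i => (pt i).2) 0
  have hpin : ∀ i : ι, (pt i).1 ∉ dom i.1.1 ∩ dom i.1.2 → pin (pt i).1 = (pt i).2 := fun i hi =>
    hinj.injective.extend_apply _ _ ⟨i, hi⟩
  refine ⟨T, pin, fun u => (finite_range fun i => (pt i).1).subset ?_, ?_, ?_,
    fun u v hne huv hvu => ?_⟩
  · rintro _ ⟨i, -, rfl⟩; exact mem_range_self i
  · rintro u _ ⟨i, hiu, rfl⟩ hx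
    rw [hpin i (hunanchored i u hiu hx)]; exact hpt_mem i u hiu
  · rintro u v huv _ ⟨⟨i, hiu, rfl⟩, ⟨j, hjv, hji⟩⟩
    by_contra hx
    simp only [not_or] at hx
    -- Two unanchored pins never share an abscissa, so `i` would contain both `u` and `v`.
    have hij : j = i := hinj (hunanchored j v hjv (hji ▸ hx.2)) (hunanchored i u hiu hx.1) hji
    exact hcomp i u v hiu (hij ▸ hjv) huv
  · let i : ι := ⟨(u, v), hne, huv, hvu⟩
    exact ⟨(pt i).1, ⟨⟨i, .inl rfl, rfl⟩, ⟨i, .inr rfl, rfl⟩⟩, (pt i).2, hpt i, hpin i⟩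

theorem exists_pinned_extension [Finite P] (hdom : ∀ u, IsClosed (dom u))
    (hf : ∀ u, ContinuousOn (f u) (dom u))
    (hrep : ∀ u v : P, u < v → ∀ x ∈ dom u ∩ dom v, f u x < f v x)
    (hreg : ∀ u v : P, u ≠ v → ¬ u < v → ¬ v < u → (RegP dom f u ∩ RegP dom f v).Nonempty) :
    ∃ (D : P → Set unitInterval) (g : P → unitInterval → ℝ), (∀ u, IsClosed (D u)) ∧
      (∀ u, ContinuousOn (g u) (D u)) ∧ (∀ u v, u < v → ∀ x ∈ D u ∩ D v, g u x < g v x) ∧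
      (∀ u, ∀ x ∈ dom u, x ∈ D u ∧ g u x = f u x) ∧
      ∀ u v, u ≠ v → ¬ u < v → ¬ v < u → ∃ x ∈ D u ∩ D v, g u x = g v x := by
  classical
  obtain ⟨T, pin, hT, hpin, hTT, htouch⟩ := exists_pins hdom hf hreg
  let g : P → unitInterval → ℝ := fun u x => if x ∈ dom u then f u x else pin x
  have hgT : ∀ u, ∀ x ∈ T u, x ∉ dom u → (x, g u x) ∈ RegP dom f u := fun u x hx hxu => by
    rw [show g u x = pin x from if_neg hxu]; exact hpin u x hx hxu
  have hg : ∀ u {x y}, (x, y) ∈ RegP dom f u → (x ∉ dom u → pin x = y) → g u x = y := by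
    intro u x y hxy hxu
    by_cases hx : x ∈ dom u
    · exact (if_pos hx).trans (hxy.1 hx).symm
    · exact (if_neg hx).trans (hxu hx)
  refine ⟨fun u => dom u ∪ T u, g, fun u => (hdom u).union (hT u).isClosed, fun u => ?_,
    fun u v huv x hx => lt_of_mem_union_of_pins hrep (fun u y hy => if_pos hy) hgT hTT huv hx,
    fun u x hx => ⟨.inl hx, if_pos hx⟩, fun u v hne huv hvu => ?_⟩
  · exact ((hf u).congr fun x hx => if_pos hx).union_of_isClosed ((hT u).continuousOn _)
      (hdom u) (hT u).isClosed
  · obtain ⟨x, hx, y, hy, hpy⟩ := htouch u v hne huv hvu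
    exact ⟨x, ⟨.inr hx.1, .inr hx.2⟩, (hg u hy.1 fun h => hpy fun h' => h h'.1).trans
      (hg v hy.2 fun h => hpy fun h' => h h'.2).symm⟩

end Regions

theorem lt_iff_forall_lt_of_exists_eq {X P : Type*} [PartialOrder P] [Nonempty X]
    {ψ : X → P → ℝ} (hψ : ∀ x, StrictMono (ψ x))
    (htouch : ∀ u v, u ≠ v → ¬ u < v → ¬ v < u → ∃ x, ψ x u = ψ x v) (u v : P) :
    u < v ↔ ∀ x, ψ x u < ψ x v := by
  refine ⟨fun h x => hψ x h, fun h => ?_⟩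
  by_contra huv
  obtain ⟨x₀⟩ := ‹Nonempty X›
  rcases eq_or_ne u v with rfl | hne
  · exact lt_irrefl _ (h x₀)
  by_cases hvu : v < u
  · exact lt_asymm (h x₀) (hψ x₀ hvu)
  obtain ⟨x, hx⟩ := htouch u v hne huv hvu
  exact (h x).ne hx

/-- a partial representation of a finite poset by piecewise linear partial
functions extends to a representation by continuous functions on all of `[0,1]` iff the
regions of any two incomparable elements intersect. -/
theorem stmt17 {P : Type*} [Fintype P] [PartialOrder P]
    (dom : P → Set unitInterval) (f : P → unitInterval → ℝ)
    (hdom : ∀ u : P, IsClosed (dom u) ∧ (dom u).OrdConnected)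
    (hpl : ∀ u : P, IsPWLOn (f u) (dom u))
    (hrep : ∀ u v : P, u < v → ∀ x ∈ dom u ∩ dom v, f u x < f v x) :
    (∃ ψ : P → C(unitInterval, ℝ),
        (∀ u v : P, u < v ↔ ∀ x : unitInterval, ψ u x < ψ v x) ∧
        ∀ u : P, ∀ x ∈ dom u, ψ u x = f u x) ↔
      ∀ u v : P, u ≠ v → ¬ u < v → ¬ v < u →
        (RegP dom f u ∩ RegP dom f v).Nonempty := by
  have hdomc : ∀ u, IsClosed (dom u) := fun u => (hdom u).1
  have hfc : ∀ u, ContinuousOn (f u) (dom u) := fun u => (hpl u).continuousOn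
  refine ⟨fun ⟨ψ, hψ, hext⟩ u v _ huv hvu => regP_inter_nonempty_of_representation hψ hext huv hvu,
    fun hreg => ?_⟩
  obtain ⟨D, g, hD, hg, hlt, hdomD, htouch⟩ := exists_pinned_extension hdomc hfc hrep hreg
  obtain ⟨ψ, hψ⟩ := exists_continuousMap_strictMono_extension hD hg hlt
  refine ⟨fun u => ⟨fun x => ψ x u, by fun_prop⟩,
    lt_iff_forall_lt_of_exists_eq (fun x => (hψ x).1) fun u v hne huv hvu => ?_, fun u x hx => ?_⟩
  · obtain ⟨x, hx, hgx⟩ := htouch u v hne huv hvu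
    exact ⟨x, ((hψ x).2 u hx.1).trans (hgx.trans ((hψ x).2 v hx.2).symm)⟩
  · exact ((hψ x).2 u (hdomD u x hx).1).trans (hdomD u x hx).2
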